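/- arXiv:2405.00674 — 2 statements merged into one kernel-verified Lean document; each statement's English description precedes it below -/
import Mathlib

section
/- For any holomorphic function f defined on a domain, and with the cross-ratio ζ = ((z-w)(u-v))/((z-u)(w-v)) viewed as a function of z and v (with w, u fixed), the identity (z-v)² ∂_z ∂_v [f(ζ)] = -(1-ζ)² (d/dζ)[ζ · f'(ζ)] holds wherever both sides are defined. -/
open Filter

set_option maxHeartbeats 2000000

/-- For a holomorphic function `f` on an open domain `s`, with the cross-ratio
`ζ(z,v) = ((z-w)(u-v))/((z-u)(w-v))` viewed as a function of `z` and `v`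
(with `w, u` fixed), one has
`(z-v)² ∂_z ∂_v [f(ζ)] = -(1-ζ)² d/dζ [ζ f'(ζ)]` wherever defined. -/
theorem stmt_5 (s : Set ℂ) (hs : IsOpen s) (f : ℂ → ℂ)
    (hf : DifferentiableOn ℂ f s)
    (w u z v : ℂ)
    (ζ : ℂ → ℂ → ℂ)
    (hζ : ζ = fun z' v' => ((z' - w) * (u - v')) / ((z' - u) * (w - v')))
    (hzu : z ≠ u) (hwv : w ≠ v) (hzv : z ≠ v)
    -- the cross-ratio stays in the domain of `f` near `(z,v)`
    (hmem : ∀ᶠ p : ℂ × ℂ in nhds (z, v), ζ p.1 p.2 ∈ s) :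
    (z - v) ^ 2 * deriv (fun z' => deriv (fun v' => f (ζ z' v')) v) z =
      -(1 - ζ z v) ^ 2 * deriv (fun x => x * deriv f x) (ζ z v) := by
  subst hζ
  simp only at hmem ⊢
  have han : AnalyticOnNhd ℂ f s := hf.analyticOnNhd hs
  have han' : AnalyticOnNhd ℂ (deriv f) s := han.deriv
  have hzu' : z - u ≠ 0 := sub_ne_zero.mpr hzu
  have hwv' : w - v ≠ 0 := sub_ne_zero.mpr hwv
  set ζ0 : ℂ := ((z - w) * (u - v)) / ((z - u) * (w - v)) with hζ0
  have hmem0 : ζ0 ∈ s := hmem.self_of_nhds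
  have hf2 : HasDerivAt (deriv f) (deriv (deriv f) ζ0) ζ0 :=
    ((han' ζ0 hmem0).differentiableAt).hasDerivAt
  -- inner derivative
  have key : ∀ z' : ℂ, z' ≠ u → ((z' - w) * (u - v)) / ((z' - u) * (w - v)) ∈ s →
      HasDerivAt (fun v' => f (((z' - w) * (u - v')) / ((z' - u) * (w - v'))))
        (deriv f (((z' - w) * (u - v)) / ((z' - u) * (w - v))) *
          ((z' - w) * (u - w) / ((z' - u) * (w - v) ^ 2))) v := by
    intro z' hz' hm
    have hz'' : z' - u ≠ 0 := sub_ne_zero.mpr hz'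
    have hden : (z' - u) * (w - v) ≠ 0 := mul_ne_zero hz'' hwv'
    have h1 : HasDerivAt (fun v' => (z' - w) * (u - v')) (-(z' - w)) v := by
      simpa using ((hasDerivAt_const v u).sub (hasDerivAt_id v)).const_mul (z' - w)
    have h2 : HasDerivAt (fun v' => (z' - u) * (w - v')) (-(z' - u)) v := by
      simpa using ((hasDerivAt_const v w).sub (hasDerivAt_id v)).const_mul (z' - u)
    have hdiv := h1.div h2 hden
    have hfd : HasDerivAt f (deriv f (((z' - w) * (u - v)) / ((z' - u) * (w - v))))
        (((z' - w) * (u - v)) / ((z' - u) * (w - v))) :=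
      ((han _ hm).differentiableAt).hasDerivAt
    have := hfd.comp v hdiv
    refine this.congr_deriv ?_
    field_simp
    ring
  -- the outer function agrees near z with the explicit formula
  have hev : (fun z' => deriv (fun v' => f (((z' - w) * (u - v')) / ((z' - u) * (w - v')))) v)
      =ᶠ[nhds z] fun z' =>
        deriv f (((z' - w) * (u - v)) / ((z' - u) * (w - v))) *
          ((z' - w) * (u - w) / ((z' - u) * (w - v) ^ 2)) := by
    have h1 : ∀ᶠ z' in nhds z, z' ≠ u := eventually_ne_nhds hzu
    have hc : ContinuousAt (fun z' : ℂ => (z', v)) z :=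
      continuousAt_id.prodMk continuousAt_const
    have h2 : ∀ᶠ z' in nhds z,
        ((z' - w) * (u - v)) / ((z' - u) * (w - v)) ∈ s := hc.eventually hmem
    filter_upwards [h1, h2] with z' hz' hm
    exact (key z' hz' hm).deriv
  -- derivative of z' ↦ ζ z' v
  have hB : HasDerivAt (fun z' => ((z' - w) * (u - v)) / ((z' - u) * (w - v)))
      ((w - u) * (u - v) / ((z - u) ^ 2 * (w - v))) z := by
    have hden : (z - u) * (w - v) ≠ 0 := mul_ne_zero hzu' hwv'
    have h1 : HasDerivAt (fun z' => (z' - w) * (u - v)) (u - v) z := by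
      simpa using ((hasDerivAt_id z).sub_const w).mul_const (u - v)
    have h2 : HasDerivAt (fun z' => (z' - u) * (w - v)) (w - v) z := by
      simpa using ((hasDerivAt_id z).sub_const u).mul_const (w - v)
    have := h1.div h2 hden
    refine this.congr_deriv ?_
    field_simp
    ring
  -- derivative of z' ↦ A z'
  have hA : HasDerivAt (fun z' => (z' - w) * (u - w) / ((z' - u) * (w - v) ^ 2))
      (-((u - w) ^ 2) / ((z - u) ^ 2 * (w - v) ^ 2)) z := by
    have hden : (z - u) * (w - v) ^ 2 ≠ 0 := mul_ne_zero hzu' (pow_ne_zero 2 hwv')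
    have h1 : HasDerivAt (fun z' => (z' - w) * (u - w)) (u - w) z := by
      simpa using ((hasDerivAt_id z).sub_const w).mul_const (u - w)
    have h2 : HasDerivAt (fun z' => (z' - u) * (w - v) ^ 2) ((w - v) ^ 2) z := by
      simpa using ((hasDerivAt_id z).sub_const u).mul_const ((w - v) ^ 2)
    have := h1.div h2 hden
    refine this.congr_deriv ?_
    field_simp
    ring
  -- outer derivative via product rule
  have hcomp : HasDerivAt (fun z' => deriv f (((z' - w) * (u - v)) / ((z' - u) * (w - v))))
      (deriv (deriv f) ζ0 * ((w - u) * (u - v) / ((z - u) ^ 2 * (w - v)))) z :=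
    by have h := hf2; rw [hζ0] at h ⊢; exact h.comp z hB
  have hprod := hcomp.mul hA
  have hL : deriv (fun z' =>
      deriv (fun v' => f (((z' - w) * (u - v')) / ((z' - u) * (w - v')))) v) z
      = deriv (deriv f) ζ0 * ((w - u) * (u - v) / ((z - u) ^ 2 * (w - v))) *
          ((z - w) * (u - w) / ((z - u) * (w - v) ^ 2)) +
        deriv f ζ0 * (-((u - w) ^ 2) / ((z - u) ^ 2 * (w - v) ^ 2)) := by
    rw [hev.deriv_eq]
    exact hprod.deriv
  have hR : deriv (fun x => x * deriv f x) ζ0 = 1 * deriv f ζ0 + ζ0 * deriv (deriv f) ζ0 :=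
    ((hasDerivAt_id' (𝕜 := ℂ) ζ0).mul hf2).deriv
  rw [hL, hR, hζ0]
  set f1 := deriv f ζ0
  set f2 := deriv (deriv f) ζ0
  have hzu5 : ((z - u) ^ 2 : ℂ) ≠ 0 := pow_ne_zero _ hzu'
  have hwv5 : ((w - v) ^ 2 : ℂ) ≠ 0 := pow_ne_zero _ hwv'
  field_simp [hzu', hwv', hzu5, hwv5]
  ring
end

section
/- Let h > 0 and define F_h(ζ) = ζ^h · ₂F₁(h, h, 2h; ζ). Then the function G(ζ) = F_h(1-ζ) satisfies -(1-ζ)² (d/dζ)[ζ · G'(ζ)] = h(1-h) · G(ζ) for ζ in the domain where G is defined. -/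
/-- The Gauss hypergeometric series `₂F₁(a, b, c; x)`. -/
noncomputable def twoF1 (a b c x : ℝ) : ℝ :=
  ∑' n : ℕ, ((ascPochhammer ℝ n).eval a * (ascPochhammer ℝ n).eval b /
    ((ascPochhammer ℝ n).eval c * (n.factorial : ℝ))) * x ^ n

/-- The 2d global conformal block of weight `h`: `F_h(ζ) = ζ^h ₂F₁(h,h,2h;ζ)`. -/
noncomputable def confBlock (h : ℝ) (ζ : ℝ) : ℝ :=
  ζ ^ (h : ℝ) * twoF1 h h (2 * h) ζ

namespace S7
open Filter Topology Set

noncomputable def a (h : ℝ) (n : ℕ) : ℝ :=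
  (ascPochhammer ℝ n).eval h * (ascPochhammer ℝ n).eval h /
    ((ascPochhammer ℝ n).eval (2 * h) * (n.factorial : ℝ))

lemma poch_pos {x : ℝ} (hx : 0 < x) (n : ℕ) : 0 < (ascPochhammer ℝ n).eval x := by
  induction n with
  | zero => simp
  | succ n ih =>
    rw [ascPochhammer_succ_eval]
    exact mul_pos ih (by positivity)

lemma a_pos {h : ℝ} (hh : 0 < h) (n : ℕ) : 0 < a h n := by
  have h1 := poch_pos hh n
  have h2 := poch_pos (by linarith : (0:ℝ) < 2 * h) n
  have h3 : (0:ℝ) < n.factorial := by positivity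
  exact div_pos (mul_pos h1 h1) (mul_pos h2 h3)

lemma a_rec {h : ℝ} (hh : 0 < h) (n : ℕ) :
    a h (n + 1) * (((n : ℝ) + 1) * (2 * h + n)) = a h n * (h + n) ^ 2 := by
  have h1 := poch_pos hh n
  have h2 := poch_pos (by linarith : (0:ℝ) < 2 * h) n
  have h3 : (0:ℝ) < n.factorial := by positivity
  simp only [a, ascPochhammer_succ_eval, Nat.factorial_succ, Nat.cast_mul, Nat.cast_add,
    Nat.cast_one]
  field_simp
lemma summable_a {h : ℝ} (hh : 0 < h) (k : ℕ) {r : ℝ} (hr0 : 0 < r) (hr1 : r < 1) :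
    Summable (fun n : ℕ => a h n * ((n : ℝ) + 1) ^ k * r ^ n) := by
  have hpos : ∀ n : ℕ, 0 < a h n * ((n : ℝ) + 1) ^ k * r ^ n := fun n => by
    have := a_pos hh n; positivity
  apply summable_of_ratio_test_tendsto_lt_one hr1
    (Eventually.of_forall fun n => (hpos n).ne')
  have base1 : Tendsto (fun n : ℕ => 2 * h + (n : ℝ)) atTop atTop :=
    tendsto_atTop_add_const_left _ _ tendsto_natCast_atTop_atTop
  have base2 : Tendsto (fun n : ℕ => (n : ℝ) + 1) atTop atTop :=
    tendsto_atTop_add_const_right _ _ tendsto_natCast_atTop_atTop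
  have hb1 : ∀ n : ℕ, (0:ℝ) < 2 * h + n := fun n => by positivity
  have hb2 : ∀ n : ℕ, (0:ℝ) < (n : ℝ) + 1 := fun n => by positivity
  have t1 : Tendsto (fun n : ℕ => (h + (n:ℝ)) / (2 * h + n)) atTop (𝓝 1) := by
    have z : Tendsto (fun n : ℕ => h / (2 * h + (n:ℝ))) atTop (𝓝 0) :=
      Tendsto.div_atTop tendsto_const_nhds base1
    have := (tendsto_const_nhds (α := ℕ) (x := (1:ℝ)) (f := atTop)).sub z
    rw [sub_zero] at this
    exact this.congr fun n => by field_simp [(hb1 n).ne']; ring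
  have t2 : Tendsto (fun n : ℕ => (h + (n:ℝ)) / ((n:ℝ) + 1)) atTop (𝓝 1) := by
    have z : Tendsto (fun n : ℕ => (h - 1) / ((n:ℝ) + 1)) atTop (𝓝 0) :=
      Tendsto.div_atTop tendsto_const_nhds base2
    have := (tendsto_const_nhds (α := ℕ) (x := (1:ℝ)) (f := atTop)).add z
    rw [add_zero] at this
    exact this.congr fun n => by field_simp [(hb2 n).ne']; ring
  have t3 : Tendsto (fun n : ℕ => (((n:ℝ) + 2) / ((n:ℝ) + 1)) ^ k) atTop (𝓝 1) := by
    have z : Tendsto (fun n : ℕ => 1 / ((n:ℝ) + 1)) atTop (𝓝 0) :=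
      Tendsto.div_atTop tendsto_const_nhds base2
    have := ((tendsto_const_nhds (α := ℕ) (x := (1:ℝ)) (f := atTop)).add z).pow k
    rw [add_zero, one_pow] at this
    exact this.congr fun n => by rw [show (1:ℝ) + 1 / ((n:ℝ) + 1) = ((n:ℝ) + 2) / ((n:ℝ) + 1) by field_simp; ring]
  have comb := (((t1.mul t2).mul t3).mul_const r)
  rw [one_mul, one_mul, one_mul] at comb
  refine comb.congr fun n => ?_
  have hrec : a h (n + 1) = a h n * (h + n) ^ 2 / (((n : ℝ) + 1) * (2 * h + n)) := by
    rw [eq_div_iff (by positivity)]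
    exact a_rec hh n
  rw [Real.norm_of_nonneg (hpos (n+1)).le, Real.norm_of_nonneg (hpos n).le, hrec]
  have h3 : a h n ≠ 0 := (a_pos hh n).ne'
  push_cast
  rw [pow_succ]
  simp only [div_pow]
  field_simp
  ring
noncomputable def f0 (h : ℝ) (y : ℝ) : ℝ := ∑' n : ℕ, a h n * y ^ n
noncomputable def f1 (h : ℝ) (y : ℝ) : ℝ := ∑' n : ℕ, a h n * ((n : ℝ) * y ^ (n - 1))
noncomputable def f2 (h : ℝ) (y : ℝ) : ℝ :=
  ∑' n : ℕ, a h n * ((n : ℝ) * (((n - 1 : ℕ) : ℝ) * y ^ (n - 1 - 1)))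

lemma pow_sub_one_le {r : ℝ} (hr0 : 0 < r) (hr1 : r ≤ 1) (n : ℕ) :
    r ^ (n - 1) ≤ r ^ n * r⁻¹ := by
  cases n with
  | zero => simpa using (one_le_inv₀ hr0).2 hr1
  | succ n => rw [Nat.add_sub_cancel, pow_succ, mul_assoc, mul_inv_cancel₀ hr0.ne', mul_one]

lemma pow_sub_two_le {r : ℝ} (hr0 : 0 < r) (hr1 : r ≤ 1) (n : ℕ) :
    r ^ (n - 1 - 1) ≤ r ^ n * r⁻¹ * r⁻¹ := by
  calc r ^ (n - 1 - 1) ≤ r ^ (n - 1) * r⁻¹ := pow_sub_one_le hr0 hr1 (n - 1)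
    _ ≤ r ^ n * r⁻¹ * r⁻¹ :=
        mul_le_mul_of_nonneg_right (pow_sub_one_le hr0 hr1 n) (inv_pos.mpr hr0).le

lemma bnd0 {h : ℝ} (hh : 0 < h) (n : ℕ) {y r : ℝ} (hy : |y| ≤ r) :
    ‖a h n * y ^ n‖ ≤ a h n * ((n : ℝ) + 1) ^ 0 * r ^ n := by
  have ha := a_pos hh n
  rw [Real.norm_eq_abs, abs_mul, abs_of_pos ha, abs_pow, pow_zero, mul_one]
  gcongr

lemma bnd1 {h : ℝ} (hh : 0 < h) (n : ℕ) {y r : ℝ} (hr0 : 0 < r) (hr1 : r ≤ 1)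
    (hy : |y| ≤ r) :
    ‖a h n * ((n : ℝ) * y ^ (n - 1))‖ ≤ a h n * ((n : ℝ) + 1) ^ 1 * r ^ n * r⁻¹ := by
  have ha := a_pos hh n
  rw [Real.norm_eq_abs, abs_mul, abs_of_pos ha, abs_mul, abs_pow, Nat.abs_cast]
  have key : |y| ^ (n - 1) ≤ r ^ n * r⁻¹ :=
    le_trans (by gcongr) (pow_sub_one_le hr0 hr1 n)

  calc a h n * ((n : ℝ) * |y| ^ (n - 1)) ≤ a h n * (((n : ℝ) + 1) * (r ^ n * r⁻¹)) := by
        gcongr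
        linarith
    _ = a h n * ((n : ℝ) + 1) ^ 1 * r ^ n * r⁻¹ := by ring

lemma bnd2 {h : ℝ} (hh : 0 < h) (n : ℕ) {y r : ℝ} (hr0 : 0 < r) (hr1 : r ≤ 1)
    (hy : |y| ≤ r) :
    ‖a h n * ((n : ℝ) * (((n - 1 : ℕ) : ℝ) * y ^ (n - 1 - 1)))‖ ≤
      a h n * ((n : ℝ) + 1) ^ 2 * r ^ n * (r⁻¹ * r⁻¹) := by
  have ha := a_pos hh n
  have h1 : ((n - 1 : ℕ) : ℝ) ≤ (n : ℝ) + 1 := by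
    have := Nat.sub_le n 1
    have : ((n - 1 : ℕ) : ℝ) ≤ (n : ℝ) := by exact_mod_cast this
    linarith
  have h0 : (0:ℝ) ≤ ((n - 1 : ℕ) : ℝ) := Nat.cast_nonneg _
  rw [Real.norm_eq_abs, abs_mul, abs_of_pos ha, abs_mul, abs_mul, abs_pow, Nat.abs_cast,
    Nat.abs_cast]
  have key : |y| ^ (n - 1 - 1) ≤ r ^ n * r⁻¹ * r⁻¹ :=
    le_trans (by gcongr) (pow_sub_two_le hr0 hr1 n)
  calc a h n * ((n : ℝ) * (((n - 1 : ℕ) : ℝ) * |y| ^ (n - 1 - 1)))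
      ≤ a h n * (((n : ℝ) + 1) * (((n : ℝ) + 1) * (r ^ n * r⁻¹ * r⁻¹))) := by
        gcongr
        linarith
    _ = a h n * ((n : ℝ) + 1) ^ 2 * r ^ n * (r⁻¹ * r⁻¹) := by ring

lemma hasDerivAt_f0 {h : ℝ} (hh : 0 < h) {r y : ℝ} (hr0 : 0 < r) (hr1 : r < 1)
    (hy : y ∈ Ioo (-r) r) : HasDerivAt (f0 h) (f1 h y) y := by
  have H := hasDerivAt_tsum_of_isPreconnected
    (u := fun n => a h n * ((n : ℝ) + 1) ^ 1 * r ^ n * r⁻¹)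
    (g := fun n z => a h n * z ^ n)
    (g' := fun n z => a h n * ((n : ℝ) * z ^ (n - 1)))
    (t := Ioo (-r) r) (y₀ := 0) (y := y)
    ((summable_a hh 1 hr0 hr1).mul_right r⁻¹) isOpen_Ioo (convex_Ioo (-r) r).isPreconnected
    (fun n z _ => HasDerivAt.const_mul (a h n) (hasDerivAt_pow n z))
    (fun n z hz => bnd1 hh n hr0 hr1.le (abs_le.mpr ⟨by linarith [hz.1], hz.2.le⟩))
    (Set.mem_Ioo.mpr ⟨by linarith, hr0⟩)
    (summable_of_ne_finset_zero (s := {0}) fun n hn => by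
      simp only [Finset.mem_singleton] at hn
      simp [zero_pow hn])
    hy
  exact H

lemma hasDerivAt_f1 {h : ℝ} (hh : 0 < h) {r y : ℝ} (hr0 : 0 < r) (hr1 : r < 1)
    (hy : y ∈ Ioo (-r) r) : HasDerivAt (f1 h) (f2 h y) y := by
  have H := hasDerivAt_tsum_of_isPreconnected
    (u := fun n => a h n * ((n : ℝ) + 1) ^ 2 * r ^ n * (r⁻¹ * r⁻¹))
    (g := fun n z => a h n * ((n : ℝ) * z ^ (n - 1)))
    (g' := fun n z => a h n * ((n : ℝ) * (((n - 1 : ℕ) : ℝ) * z ^ (n - 1 - 1))))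
    (t := Ioo (-r) r) (y₀ := 0) (y := y)
    ((summable_a hh 2 hr0 hr1).mul_right (r⁻¹ * r⁻¹)) isOpen_Ioo
    (convex_Ioo (-r) r).isPreconnected
    (fun n z _ => HasDerivAt.const_mul (a h n)
      (HasDerivAt.const_mul ((n : ℝ)) (hasDerivAt_pow (n - 1) z)))
    (fun n z hz => bnd2 hh n hr0 hr1.le (abs_le.mpr ⟨by linarith [hz.1], hz.2.le⟩))
    (Set.mem_Ioo.mpr ⟨by linarith, hr0⟩)
    (summable_of_ne_finset_zero (s := {0, 1}) fun n hn => by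
      simp only [Finset.mem_insert, Finset.mem_singleton] at hn
      push_neg at hn
      match n, hn with
      | (m + 2), _ => simp [zero_pow]
      )
    hy
  exact H
lemma ode {h : ℝ} (hh : 0 < h) {y : ℝ} (hy : y ∈ Ioo (0 : ℝ) 1) :
    y * (1 - y) * f2 h y + (2 * h - (2 * h + 1) * y) * f1 h y = h ^ 2 * f0 h y := by
  obtain ⟨hy0, hy1⟩ := hy
  have hya : |y| ≤ y := (abs_of_pos hy0).le
  have S0 : Summable (fun n => a h n * y ^ n) :=
    Summable.of_norm_bounded (summable_a hh 0 hy0 hy1) (fun n => bnd0 hh n hya)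
  have S1 : Summable (fun n => a h n * ((n : ℝ) * y ^ (n - 1))) :=
    Summable.of_norm_bounded ((summable_a hh 1 hy0 hy1).mul_right y⁻¹)
      (fun n => bnd1 hh n hy0 hy1.le hya)
  have S2 : Summable (fun n => a h n * ((n : ℝ) * (((n - 1 : ℕ) : ℝ) * y ^ (n - 1 - 1)))) :=
    Summable.of_norm_bounded ((summable_a hh 2 hy0 hy1).mul_right (y⁻¹ * y⁻¹))
      (fun n => bnd2 hh n hy0 hy1.le hya)
  have SP : Summable (fun n : ℕ => a h n * ((n : ℝ) * ((n : ℝ) + 2 * h - 1)) * y ^ (n - 1)) := by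
    apply Summable.of_norm_bounded (((summable_a hh 2 hy0 hy1).mul_right ((2 * h + 1) * y⁻¹)))
    intro n
    have ha := a_pos hh n
    have hb : |(n : ℝ) * ((n : ℝ) + 2 * h - 1)| ≤ ((n : ℝ) + 1) * (((n : ℝ) + 1) * (2 * h + 1)) := by
      rw [abs_mul, Nat.abs_cast]
      have h2 : |(n : ℝ) + 2 * h - 1| ≤ ((n : ℝ) + 1) * (2 * h + 1) := by
        rw [abs_le]
        constructor <;> nlinarith [Nat.cast_nonneg (α := ℝ) n]
      have h3 : (0 : ℝ) ≤ (n : ℝ) := Nat.cast_nonneg n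
      nlinarith
    rw [Real.norm_eq_abs, abs_mul, abs_mul, abs_of_pos ha, abs_pow, abs_of_pos hy0]
    calc a h n * |(n : ℝ) * ((n : ℝ) + 2 * h - 1)| * y ^ (n - 1)
        ≤ a h n * (((n : ℝ) + 1) * (((n : ℝ) + 1) * (2 * h + 1))) * (y ^ n * y⁻¹) := by
          gcongr
          exact pow_sub_one_le hy0 hy1.le n
      _ = a h n * ((n : ℝ) + 1) ^ 2 * y ^ n * ((2 * h + 1) * y⁻¹) := by ring
  have SQ : Summable (fun n : ℕ => a h n * ((n : ℝ) + h) ^ 2 * y ^ n) := by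
    apply Summable.of_norm_bounded (((summable_a hh 2 hy0 hy1).mul_right ((1 + h) ^ 2)))
    intro n
    have ha := a_pos hh n
    have h3 : (0 : ℝ) ≤ (n : ℝ) := Nat.cast_nonneg n
    rw [Real.norm_of_nonneg (by positivity)]
    calc a h n * ((n : ℝ) + h) ^ 2 * y ^ n
        ≤ a h n * (((n : ℝ) + 1) * (1 + h)) ^ 2 * y ^ n := by
          gcongr
          nlinarith
      _ = a h n * ((n : ℝ) + 1) ^ 2 * y ^ n * (1 + h) ^ 2 := by ring
  have E : (∑' n : ℕ, a h n * ((n : ℝ) * ((n : ℝ) + 2 * h - 1)) * y ^ (n - 1)) =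
      ∑' n : ℕ, a h n * ((n : ℝ) + h) ^ 2 * y ^ n := by
    rw [Summable.tsum_eq_zero_add SP]
    simp only [Nat.cast_zero, Nat.add_sub_cancel]
    rw [show a h 0 * ((0 : ℝ) * ((0 : ℝ) + 2 * h - 1)) * y ^ (0 - 1) = 0 by ring, zero_add]
    refine tsum_congr fun n => ?_
    push_cast
    linear_combination y ^ n * a_rec hh n
  have key : ∀ n : ℕ,
      ((y * (1 - y)) * (a h n * ((n : ℝ) * (((n - 1 : ℕ) : ℝ) * y ^ (n - 1 - 1)))) +
        (2 * h - (2 * h + 1) * y) * (a h n * ((n : ℝ) * y ^ (n - 1)))) -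
          h ^ 2 * (a h n * y ^ n) =
      a h n * ((n : ℝ) * ((n : ℝ) + 2 * h - 1)) * y ^ (n - 1) -
        a h n * ((n : ℝ) + h) ^ 2 * y ^ n := by
    intro n
    match n with
    | 0 => norm_num; ring
    | 1 => norm_num; ring
    | (m + 2) =>
      simp only [Nat.succ_sub_one, Nat.add_sub_cancel]
      push_cast
      ring
  have lhs : y * (1 - y) * f2 h y + (2 * h - (2 * h + 1) * y) * f1 h y - h ^ 2 * f0 h y = 0 := by
    rw [f0, f1, f2, ← Summable.tsum_mul_left (y * (1 - y)) S2,
      ← Summable.tsum_mul_left (2 * h - (2 * h + 1) * y) S1,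
      ← Summable.tsum_mul_left (h ^ 2) S0,
      ← Summable.tsum_add (S2.mul_left _) (S1.mul_left _),
      ← Summable.tsum_sub ((S2.mul_left _).add (S1.mul_left _)) (S0.mul_left _)]
    rw [tsum_congr key, Summable.tsum_sub SP SQ, E, sub_self]
  linarith
end S7

open S7 Filter Topology Set in
/-- For `h > 0`, the crossed-channel block `G(ζ) = F_h(1-ζ)` satisfies the
eigenvalue equation `-(1-ζ)² d/dζ [ζ G'(ζ)] = h(1-h) G(ζ)`. -/
theorem stmt_7 (h : ℝ) (hh : 0 < h) :
    ∀ ζ ∈ Set.Ioo (0 : ℝ) 1,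
      -(1 - ζ) ^ 2 *
          deriv (fun x => x * deriv (fun y => confBlock h (1 - y)) x) ζ =
        h * (1 - h) * confBlock h (1 - ζ) := by
  intro ζ hζ
  obtain ⟨hζ0, hζ1⟩ := hζ
  set r : ℝ := (2 - ζ) / 2 with hr
  have hr0 : 0 < r := by rw [hr]; linarith
  have hr1 : r < 1 := by rw [hr]; linarith
  have hζr : 1 - r < ζ := by rw [hr]; linarith
  -- derivative of G on a neighborhood
  have deriv_formula : ∀ x ∈ Ioo (1 - r) 1,
      deriv (fun y => confBlock h (1 - y)) x =
        h * (1 - x) ^ (h - 1) * (-1) * f0 h (1 - x) +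
          (1 - x) ^ (h : ℝ) * (f1 h (1 - x) * (-1)) := by
    intro x hx
    have hw0 : (0 : ℝ) < 1 - x := by linarith [hx.2]
    have hwmem : (1 - x) ∈ Ioo (-r) r := ⟨by linarith, by linarith [hx.1]⟩
    have inner : HasDerivAt (fun y : ℝ => 1 - y) (-1) x := (hasDerivAt_id x).const_sub 1
    have d1 : HasDerivAt (fun y : ℝ => (1 - y) ^ (h : ℝ))
        (h * (1 - x) ^ (h - 1) * (-1)) x := by
      have := inner.rpow_const (p := h) (Or.inl hw0.ne')
      convert this using 1; ring
    have d2 : HasDerivAt (fun y : ℝ => f0 h (1 - y)) (f1 h (1 - x) * (-1)) x :=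
      (hasDerivAt_f0 hh hr0 hr1 hwmem).comp x inner
    have dG : HasDerivAt (fun y => confBlock h (1 - y))
        (h * (1 - x) ^ (h - 1) * (-1) * f0 h (1 - x) +
          (1 - x) ^ (h : ℝ) * (f1 h (1 - x) * (-1))) x := d1.mul d2
    exact dG.deriv
  have ev : (fun x => x * deriv (fun y => confBlock h (1 - y)) x) =ᶠ[𝓝 ζ]
      (fun x => x * (h * (1 - x) ^ (h - 1) * (-1) * f0 h (1 - x) +
        (1 - x) ^ (h : ℝ) * (f1 h (1 - x) * (-1)))) := by
    filter_upwards [Ioo_mem_nhds hζr hζ1] with x hx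
    rw [deriv_formula x hx]
  rw [ev.deriv_eq]
  have hu0 : (0 : ℝ) < 1 - ζ := by linarith
  have humem : (1 - ζ) ∈ Ioo (-r) r := ⟨by linarith, by linarith⟩
  have inner : HasDerivAt (fun y : ℝ => 1 - y) (-1) ζ := (hasDerivAt_id ζ).const_sub 1
  have dA : HasDerivAt (fun x : ℝ => (1 - x) ^ (h : ℝ))
      (h * (1 - ζ) ^ (h - 1) * (-1)) ζ := by
    have := inner.rpow_const (p := h) (Or.inl hu0.ne')
    convert this using 1; ring
  have dB : HasDerivAt (fun x : ℝ => (1 - x) ^ (h - 1 : ℝ))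
      ((h - 1) * (1 - ζ) ^ (h - 1 - 1) * (-1)) ζ := by
    have := inner.rpow_const (p := h - 1) (Or.inl hu0.ne')
    convert this using 1; ring
  have dF0 : HasDerivAt (fun x : ℝ => f0 h (1 - x)) (f1 h (1 - ζ) * (-1)) ζ :=
    (hasDerivAt_f0 hh hr0 hr1 humem).comp ζ inner
  have dF1 : HasDerivAt (fun x : ℝ => f1 h (1 - x)) (f2 h (1 - ζ) * (-1)) ζ :=
    (hasDerivAt_f1 hh hr0 hr1 humem).comp ζ inner
  have T1 : HasDerivAt (fun x : ℝ => h * (1 - x) ^ (h - 1 : ℝ) * (-1) * f0 h (1 - x))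
      ((h * ((h - 1) * (1 - ζ) ^ (h - 1 - 1) * (-1)) * (-1)) * f0 h (1 - ζ) +
        (h * (1 - ζ) ^ (h - 1) * (-1)) * (f1 h (1 - ζ) * (-1))) ζ :=
    ((dB.const_mul h).mul_const (-1)).mul dF0
  have T2 : HasDerivAt (fun x : ℝ => (1 - x) ^ (h : ℝ) * (f1 h (1 - x) * (-1)))
      ((h * (1 - ζ) ^ (h - 1) * (-1)) * (f1 h (1 - ζ) * (-1)) +
        (1 - ζ) ^ (h : ℝ) * ((f2 h (1 - ζ) * (-1)) * (-1))) ζ :=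
    dA.mul (dF1.mul_const (-1))
  have dFull := (hasDerivAt_id' ζ).fun_mul (T1.fun_add T2)
  rw [dFull.deriv]
  rw [show confBlock h (1 - ζ) = (1 - ζ) ^ (h : ℝ) * f0 h (1 - ζ) from rfl]
  have hBA : (1 - ζ) ^ (h : ℝ) = (1 - ζ) ^ (h - 1 : ℝ) * (1 - ζ) := by
    rw [← Real.rpow_add_one hu0.ne' (h - 1)]; norm_num
  have hCB : (1 - ζ) ^ (h - 1 : ℝ) = (1 - ζ) ^ (h - 1 - 1 : ℝ) * (1 - ζ) := by
    rw [← Real.rpow_add_one hu0.ne' (h - 1 - 1)]; norm_num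
  rw [hBA, hCB]
  have hode := ode hh (show (1 - ζ) ∈ Ioo (0 : ℝ) 1 from ⟨hu0, by linarith⟩)
  linear_combination (-(1 - ζ) ^ (h - 1 - 1 : ℝ) * (1 - ζ) ^ 3) * hode
end
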